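/- Lemma 2: let f : A ⊢ B be an arrow term of DS such that an occurrence x of a letter p in A is linked in f to an occurrence y of p in B. Then it is impossible that A has a subformula occurrence of the form x∧A′ or A′∧x and B has a subformula occurrence of the form y∨B′ or B′∨y. -/

import Mathlib

/-! ### The category Br of Brauerian split equivalences of finite ordinals

An arrow `m ⊢ n` of `Br` is represented as a relation on `ℕ ⊕ ℕ`, where
`Sum.inl i` (with `i < m`) is the source copy `i_s` and `Sum.inr j`
(with `j < n`) is the target copy `j_t`. -/

abbrev GRel : Type := (ℕ ⊕ ℕ) → (ℕ ⊕ ℕ) → Prop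

/-- The identity arrow of `Br` on `n`: transversals `{i_s, i_t}` for `i < n`. -/
def gId (n : ℕ) : GRel := fun u v =>
  ∃ i, i < n ∧ (u = Sum.inl i ∨ u = Sum.inr i) ∧ (v = Sum.inl i ∨ v = Sum.inr i)

/-- The Brauerian split equivalence whose transversals are `{i_s, (φ i)_t}` for `i < m`. -/
def gFun (m : ℕ) (φ : ℕ → ℕ) : GRel := fun u v =>
  ∃ i, i < m ∧ (u = Sum.inl i ∨ u = Sum.inr (φ i)) ∧ (v = Sum.inl i ∨ v = Sum.inr (φ i))

/-- The block transposition exchanging the first `a` and the last `b` elements. -/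
def gSwap (a b : ℕ) : GRel :=
  gFun (a + b) (fun i => if i < a then i + b else i - a)

/-- `G Δ̂∧_{B,A}` with `a = GA`, `b = GB`: identity transversals on the stem `A`
together with caps joining the two copies of each letter occurrence of `B` in
the crown `¬B ∨ B` of the target. -/
def gDelta (a b : ℕ) : GRel := fun u v =>
  (∃ i, i < a ∧ (u = Sum.inl i ∨ u = Sum.inr i) ∧ (v = Sum.inl i ∨ v = Sum.inr i)) ∨
  (∃ j, j < b ∧ (u = Sum.inr (a + j) ∨ u = Sum.inr (a + b + j)) ∧
                (v = Sum.inr (a + j) ∨ v = Sum.inr (a + b + j)))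

/-- `G Σ̂∨_{B,A}` with `a = GA`, `b = GB`: identity transversals on the stem `A`
together with cups joining the two copies of each letter occurrence of `B` in
the crown `B ∧ ¬B` of the source. -/
def gSigma (a b : ℕ) : GRel := fun u v =>
  (∃ i, i < a ∧ (u = Sum.inl (2*b + i) ∨ u = Sum.inr i) ∧
                (v = Sum.inl (2*b + i) ∨ v = Sum.inr i)) ∨
  (∃ j, j < b ∧ (u = Sum.inl j ∨ u = Sum.inl (b + j)) ∧
                (v = Sum.inl j ∨ v = Sum.inl (b + j)))

/-- Composition `P ∗ R` in `Br`: glue along the middle copy and take the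
transitive closure, restricted to the outer copies. -/
def gComp (Pr R : GRel) : GRel := fun u v =>
  Relation.TransGen
    (fun x y : ℕ ⊕ ℕ ⊕ ℕ =>
      (∃ x' y', Sum.map id Sum.inl x' = x ∧ Sum.map id Sum.inl y' = y ∧ R x' y') ∨
      (∃ x' y', Sum.inr x' = x ∧ Sum.inr y' = y ∧ Pr x' y'))
    (Sum.map id Sum.inr u) (Sum.map id Sum.inr v)

/-- Shift a split relation by `a` on the source side and by `d` on the target side. -/
def gShift (a d : ℕ) (R : GRel) : GRel := fun u v =>
  ∃ u' v', R u' v' ∧ u = Sum.map (· + a) (· + d) u' ∧ v = Sum.map (· + a) (· + d) v'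

/-- Disjoint union of split relations: `G(f ξ g) = Gf ∪ Gg_{+GD}^{+GA}`. -/
def gPar (a d : ℕ) (R S : GRel) : GRel := fun u v => R u v ∨ gShift a d S u v
/-! ### The language L∧,∨ generated from the set `P` of letters -/

inductive Form (P : Type) : Type
  | letter : P → Form P
  | conj : Form P → Form P → Form P
  | disj : Form P → Form P → Form P

infixr:70 " ⋏ " => Form.conj
infixr:66 " ⋎ " => Form.disj

/-- The number of occurrences of letters in a formula (the object map of `G`). -/
def Form.size {P : Type} : Form P → ℕ
  | .letter _ => 1
  | .conj A B => A.size + B.size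
  | .disj A B => A.size + B.size
/-! ### Arrow terms of the free symmetric net category DS -/

inductive Term (P : Type) : Form P → Form P → Type
  | id (A : Form P) : Term P A A
  | comp {A B C : Form P} : Term P B C → Term P A B → Term P A C
  | conj {A B D E : Form P} : Term P A D → Term P B E → Term P (A ⋏ B) (D ⋏ E)
  | disj {A B D E : Form P} : Term P A D → Term P B E → Term P (A ⋎ B) (D ⋎ E)
  | bConjTo (A B C : Form P) : Term P (A ⋏ (B ⋏ C)) ((A ⋏ B) ⋏ C)
  | bConjFrom (A B C : Form P) : Term P ((A ⋏ B) ⋏ C) (A ⋏ (B ⋏ C))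
  | bDisjTo (A B C : Form P) : Term P (A ⋎ (B ⋎ C)) ((A ⋎ B) ⋎ C)
  | bDisjFrom (A B C : Form P) : Term P ((A ⋎ B) ⋎ C) (A ⋎ (B ⋎ C))
  | cConj (A B : Form P) : Term P (A ⋏ B) (B ⋏ A)
  | cDisj (A B : Form P) : Term P (B ⋎ A) (A ⋎ B)
  | d (A B C : Form P) : Term P (A ⋏ (B ⋎ C)) ((A ⋏ B) ⋎ C)

infixr:80 " ⬝ " => Term.comp
infixr:70 " ⊼ " => Term.conj
infixr:66 " ⊽ " => Term.disj

/-- The arrow `d^R_{C,B,A} : (C∨B)∧A ⊢ C∨(B∧A)`. -/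
def dR {P : Type} (C B A : Form P) : Term P ((C ⋎ B) ⋏ A) (C ⋎ (B ⋏ A)) :=
  Term.cDisj C (B ⋏ A) ⬝ ((Term.cConj A B ⊽ Term.id C) ⬝
    (Term.d A B C ⬝ ((Term.id A ⊼ Term.cDisj B C) ⬝ Term.cConj (C ⋎ B) A)))
/-! ### The equations of DS, imposed on arrow terms -/

inductive Eqv {P : Type} : ∀ {A B : Form P}, Term P A B → Term P A B → Prop
  -- equivalence and congruence
  | refl {A B : Form P} (f : Term P A B) : Eqv f f
  | symm {A B : Form P} {f g : Term P A B} : Eqv f g → Eqv g f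
  | trans {A B : Form P} {f g h : Term P A B} : Eqv f g → Eqv g h → Eqv f h
  | congComp {A B C : Form P} {g g' : Term P B C} {f f' : Term P A B} :
      Eqv g g' → Eqv f f' → Eqv (g ⬝ f) (g' ⬝ f')
  | congConj {A B D E : Form P} {f f' : Term P A D} {g g' : Term P B E} :
      Eqv f f' → Eqv g g' → Eqv (f ⊼ g) (f' ⊼ g')
  | congDisj {A B D E : Form P} {f f' : Term P A D} {g g' : Term P B E} :
      Eqv f f' → Eqv g g' → Eqv (f ⊽ g) (f' ⊽ g')
  -- (cat 1), (cat 2)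
  | catIdR {A B : Form P} (f : Term P A B) : Eqv (f ⬝ Term.id A) f
  | catIdL {A B : Form P} (f : Term P A B) : Eqv (Term.id B ⬝ f) f
  | catAssoc {A B C D : Form P} (f : Term P A B) (g : Term P B C) (h : Term P C D) :
      Eqv (h ⬝ (g ⬝ f)) ((h ⬝ g) ⬝ f)
  -- bifunctorial equations (ξ 1), (ξ 2)
  | conjOne (A B : Form P) : Eqv (Term.id A ⊼ Term.id B) (Term.id (A ⋏ B))
  | disjOne (A B : Form P) : Eqv (Term.id A ⊽ Term.id B) (Term.id (A ⋎ B))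
  | conjTwo {A₁ B₁ C₁ A₂ B₂ C₂ : Form P} (g₁ : Term P B₁ C₁) (f₁ : Term P A₁ B₁)
      (g₂ : Term P B₂ C₂) (f₂ : Term P A₂ B₂) :
      Eqv ((g₁ ⬝ f₁) ⊼ (g₂ ⬝ f₂)) ((g₁ ⊼ g₂) ⬝ (f₁ ⊼ f₂))
  | disjTwo {A₁ B₁ C₁ A₂ B₂ C₂ : Form P} (g₁ : Term P B₁ C₁) (f₁ : Term P A₁ B₁)
      (g₂ : Term P B₂ C₂) (f₂ : Term P A₂ B₂) :
      Eqv ((g₁ ⬝ f₁) ⊽ (g₂ ⬝ f₂)) ((g₁ ⊽ g₂) ⬝ (f₁ ⊽ f₂))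
  -- naturality equations
  | bConjNat {A B C D E F : Form P} (f : Term P A D) (g : Term P B E) (h : Term P C F) :
      Eqv (((f ⊼ g) ⊼ h) ⬝ Term.bConjTo A B C) (Term.bConjTo D E F ⬝ (f ⊼ (g ⊼ h)))
  | bDisjNat {A B C D E F : Form P} (f : Term P A D) (g : Term P B E) (h : Term P C F) :
      Eqv (((f ⊽ g) ⊽ h) ⬝ Term.bDisjTo A B C) (Term.bDisjTo D E F ⬝ (f ⊽ (g ⊽ h)))
  | cConjNat {A B D E : Form P} (f : Term P A D) (g : Term P B E) :
      Eqv ((g ⊼ f) ⬝ Term.cConj A B) (Term.cConj D E ⬝ (f ⊼ g))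
  | cDisjNat {A B D E : Form P} (f : Term P A D) (g : Term P B E) :
      Eqv ((g ⊽ f) ⬝ Term.cDisj B A) (Term.cDisj E D ⬝ (f ⊽ g))
  | dNat {A B C D E F : Form P} (f : Term P A D) (g : Term P B E) (h : Term P C F) :
      Eqv (((f ⊼ g) ⊽ h) ⬝ Term.d A B C) (Term.d D E F ⬝ (f ⊼ (g ⊽ h)))
  -- (b̂ξ b̂ξ)
  | bConjIso₁ (A B C : Form P) :
      Eqv (Term.bConjFrom A B C ⬝ Term.bConjTo A B C) (Term.id (A ⋏ (B ⋏ C)))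
  | bConjIso₂ (A B C : Form P) :
      Eqv (Term.bConjTo A B C ⬝ Term.bConjFrom A B C) (Term.id ((A ⋏ B) ⋏ C))
  | bDisjIso₁ (A B C : Form P) :
      Eqv (Term.bDisjFrom A B C ⬝ Term.bDisjTo A B C) (Term.id (A ⋎ (B ⋎ C)))
  | bDisjIso₂ (A B C : Form P) :
      Eqv (Term.bDisjTo A B C ⬝ Term.bDisjFrom A B C) (Term.id ((A ⋎ B) ⋎ C))
  -- (b̂ξ 5)
  | bConjPent (A B C D : Form P) :
      Eqv (Term.bConjFrom A B (C ⋏ D) ⬝ Term.bConjFrom (A ⋏ B) C D)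
        ((Term.id A ⊼ Term.bConjFrom B C D) ⬝
          (Term.bConjFrom A (B ⋏ C) D ⬝ (Term.bConjFrom A B C ⊼ Term.id D)))
  | bDisjPent (A B C D : Form P) :
      Eqv (Term.bDisjFrom A B (C ⋎ D) ⬝ Term.bDisjFrom (A ⋎ B) C D)
        ((Term.id A ⊽ Term.bDisjFrom B C D) ⬝
          (Term.bDisjFrom A (B ⋎ C) D ⬝ (Term.bDisjFrom A B C ⊽ Term.id D)))
  -- (ĉ∧ ĉ∧), (ĉ∨ ĉ∨)
  | cConjIso (A B : Form P) : Eqv (Term.cConj B A ⬝ Term.cConj A B) (Term.id (A ⋏ B))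
  | cDisjIso (A B : Form P) : Eqv (Term.cDisj A B ⬝ Term.cDisj B A) (Term.id (A ⋎ B))
  -- (b̂∧ ĉ∧), (b̂∨ ĉ∨)
  | bcConj (A B C : Form P) :
      Eqv ((Term.id B ⊼ Term.cConj C A) ⬝ (Term.bConjFrom B C A ⬝
            (Term.cConj A (B ⋏ C) ⬝ (Term.bConjFrom A B C ⬝ (Term.cConj B A ⊼ Term.id C)))))
        (Term.bConjFrom B A C)
  | bcDisj (A B C : Form P) :
      Eqv ((Term.id B ⊽ Term.cDisj A C) ⬝ (Term.bDisjFrom B C A ⬝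
            (Term.cDisj (B ⋎ C) A ⬝ (Term.bDisjFrom A B C ⬝ (Term.cDisj A B ⊽ Term.id C)))))
        (Term.bDisjFrom B A C)
  -- (d ∧), (d ∨)
  | dConj (A B C D : Form P) :
      Eqv ((Term.bConjFrom A B C ⊽ Term.id D) ⬝ Term.d (A ⋏ B) C D)
        (Term.d A (B ⋏ C) D ⬝ ((Term.id A ⊼ Term.d B C D) ⬝ Term.bConjFrom A B (C ⋎ D)))
  | dDisj (D C B A : Form P) :
      Eqv (Term.d D C (B ⋎ A) ⬝ (Term.id D ⊼ Term.bDisjFrom C B A))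
        (Term.bDisjFrom (D ⋏ C) B A ⬝ ((Term.d D C B ⊽ Term.id A) ⬝ Term.d D (C ⋎ B) A))
  -- (d b̂∧), (d b̂∨)
  | dBConj (A B C D : Form P) :
      Eqv (dR (A ⋏ B) C D ⬝ (Term.d A B C ⊼ Term.id D))
        (Term.d A B (C ⋏ D) ⬝ ((Term.id A ⊼ dR B C D) ⬝ Term.bConjFrom A (B ⋎ C) D))
  | dBDisj (D C B A : Form P) :
      Eqv ((Term.id D ⊽ Term.d C B A) ⬝ dR D C (B ⋎ A))
        (Term.bDisjFrom D (C ⋏ B) A ⬝ ((dR D C B ⊽ Term.id A) ⬝ Term.d (D ⋎ C) B A))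
/-- The functor `G` from DS to Br on arrow terms. -/
def Term.G {P : Type} : ∀ {A B : Form P}, Term P A B → GRel
  | _, _, .id A => gId A.size
  | _, _, .comp g f => gComp (Term.G g) (Term.G f)
  | _, _, @Term.conj _ A _ D _ f g => gPar A.size D.size (Term.G f) (Term.G g)
  | _, _, @Term.disj _ A _ D _ f g => gPar A.size D.size (Term.G f) (Term.G g)
  | _, _, .bConjTo A B C => gId (A.size + (B.size + C.size))
  | _, _, .bConjFrom A B C => gId (A.size + B.size + C.size)
  | _, _, .bDisjTo A B C => gId (A.size + (B.size + C.size))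
  | _, _, .bDisjFrom A B C => gId (A.size + B.size + C.size)
  | _, _, .cConj A B => gSwap A.size B.size
  | _, _, .cDisj A B => gSwap B.size A.size
  | _, _, .d A B C => gId (A.size + (B.size + C.size))
/-! ### Occurrences of letters and subformula occurrences -/

/-- The letter at the `(n+1)`-th letter-occurrence position of a formula
(`n` counted from `0`, from the left). -/
def Form.letterAt {P : Type} : Form P → ℕ → Option P
  | .letter p, 0 => some p
  | .letter _, _ + 1 => none
  | .conj A B, n => if n < A.size then A.letterAt n else B.letterAt (n - A.size)
  | .disj A B, n => if n < A.size then A.letterAt n else B.letterAt (n - A.size)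

/-- Directions for addressing subformula occurrences. -/
inductive Dir : Type
  | l
  | r
deriving DecidableEq

/-- The subformula occurrence of a formula at a given position (path). -/
def Form.subAt {P : Type} : Form P → List Dir → Option (Form P)
  | A, [] => some A
  | .conj A _, .l :: π => A.subAt π
  | .conj _ B, .r :: π => B.subAt π
  | .disj A _, .l :: π => A.subAt π
  | .disj _ B, .r :: π => B.subAt π
  | .letter _, _ :: _ => none

/-- The number of letter occurrences strictly to the left of the subformula
occurrence at a given position. -/
def Form.offsetAt {P : Type} : Form P → List Dir → ℕ
  | _, [] => 0
  | .conj A _, .l :: π => A.offsetAt π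
  | .conj A B, .r :: π => A.size + B.offsetAt π
  | .disj A _, .l :: π => A.offsetAt π
  | .disj A B, .r :: π => A.size + B.offsetAt π
  | .letter _, _ :: _ => 0

/-- The `(n+1)`-th occurrence of a letter in `A` is *linked* in `f : A ⊢ B` to the
`(m+1)`-th occurrence of the same letter in `B` when `{n_s, m_t}` is a member of
the partition corresponding to `Gf`. -/
def Linked {P : Type} {A B : Form P} (f : Term P A B) (n m : ℕ) : Prop :=
  Term.G f (Sum.inl n) (Sum.inr m)

/-!
`G f` is the graph of a bijection `f.occMap` from the letter occurrences of `A` to those of `B`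
(the composite of two such graphs in `Br` is the graph of the composite bijection, since every
thread through the middle is a single transversal). This bijection sends an immediate conjunct
to an immediate conjunct: the primitive arrow terms either permute the occurrences preserving
their parent connective or, for `d : A ∧ (B ∨ C) ⊢ (A ∧ B) ∨ C`, change it only from `∨` to `∧`,
and the property is stable under `∘`, `∧` and `∨`. So `y`, the image of the conjunct `x`, is a
conjunct, and cannot be a disjunct.
-/

open Set Relation

def blockSwap (a b : ℕ) : ℕ → ℕ := fun i => if i < a then i + b else i - a

def blockPar (a d : ℕ) (φ ψ : ℕ → ℕ) : ℕ → ℕ := fun i => if i < a then φ i else ψ (i - a) + d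

theorem bijOn_blockSwap (a b : ℕ) : BijOn (blockSwap a b) (Iio (a + b)) (Iio (b + a)) := by
  refine ⟨fun i hi => ?_, fun i hi j hj h => ?_, fun j hj => ?_⟩
  · simp only [mem_Iio, blockSwap] at hi ⊢; split_ifs <;> omega
  · simp only [mem_Iio, blockSwap] at hi hj h; split_ifs at h <;> omega
  · simp only [mem_Iio, mem_image, blockSwap] at hj ⊢
    by_cases h : j < b
    · exact ⟨j + a, by omega, by rw [if_neg (by omega)]; omega⟩
    · exact ⟨j - b, by omega, by rw [if_pos (by omega)]; omega⟩

theorem Set.BijOn.blockPar {a b d e : ℕ} {φ ψ : ℕ → ℕ} (hφ : BijOn φ (Iio a) (Iio d))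
    (hψ : BijOn ψ (Iio b) (Iio e)) :
    BijOn (blockPar a d φ ψ) (Iio (a + b)) (Iio (d + e)) := by
  refine ⟨fun i hi => ?_, fun i hi j hj h => ?_, fun k hk => ?_⟩
  · simp only [mem_Iio, _root_.blockPar] at hi ⊢
    split_ifs with h
    · exact Nat.lt_add_right e (hφ.mapsTo (mem_Iio.2 h))
    · have := hψ.mapsTo (mem_Iio.2 (show i - a < b by omega)); simp only [mem_Iio] at this; omega
  · simp only [mem_Iio, _root_.blockPar] at hi hj h
    have hφd : ∀ i < a, φ i < d := fun i hi => hφ.mapsTo (mem_Iio.2 hi)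
    split_ifs at h with hia hja hja
    · exact hφ.injOn hia hja h
    · have := hφd i hia; omega
    · have := hφd j hja; omega
    · have := hψ.injOn (mem_Iio.2 (show i - a < b by omega)) (mem_Iio.2 (show j - a < b by omega))
        (by omega)
      omega
  · simp only [mem_Iio, mem_image, _root_.blockPar] at hk ⊢
    by_cases hkd : k < d
    · obtain ⟨i, hi, rfl⟩ := hφ.surjOn (mem_Iio.2 hkd)
      exact ⟨i, by simp only [mem_Iio] at hi; omega, by rw [if_pos (mem_Iio.1 hi)]⟩
    · obtain ⟨j, hj, hjk⟩ := hψ.surjOn (mem_Iio.2 (show k - d < e by omega))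
      simp only [mem_Iio] at hj
      exact ⟨j + a, by omega, by rw [if_neg (by omega), Nat.add_sub_cancel, hjk]; omega⟩

theorem gFun_inl_inr {a n m : ℕ} {φ : ℕ → ℕ} :
    gFun a φ (Sum.inl n) (Sum.inr m) ↔ n < a ∧ φ n = m := by
  simp [gFun, eq_comm]

theorem gPar_gFun (a b d : ℕ) (φ ψ : ℕ → ℕ) :
    gPar a d (gFun a φ) (gFun b ψ) = gFun (a + b) (blockPar a d φ ψ) := by
  funext u v
  apply propext
  constructor
  · rintro (⟨i, hi, hu, hv⟩ | ⟨u', v', ⟨j, hj, hu, hv⟩, rfl, rfl⟩)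
    · exact ⟨i, by omega, by simpa [blockPar, hi] using hu, by simpa [blockPar, hi] using hv⟩
    · refine ⟨j + a, by omega, ?_, ?_⟩
      · rcases hu with rfl | rfl <;> simp [blockPar]
      · rcases hv with rfl | rfl <;> simp [blockPar]
  · rintro ⟨i, hi, hu, hv⟩
    by_cases hia : i < a
    · exact Or.inl ⟨i, hia, by simpa [blockPar, hia] using hu, by simpa [blockPar, hia] using hv⟩
    · have hlift : ∀ x, (x = Sum.inl i ∨ x = Sum.inr (ψ (i - a) + d)) → ∃ x',
          (x' = Sum.inl (i - a) ∨ x' = Sum.inr (ψ (i - a))) ∧ x = Sum.map (· + a) (· + d) x' := by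
        rintro x (rfl | rfl)
        · exact ⟨_, Or.inl rfl, by simp only [Sum.map_inl]; congr; omega⟩
        · exact ⟨_, Or.inr rfl, rfl⟩
      simp only [blockPar, if_neg hia] at hu hv
      obtain ⟨u', hu', rfl⟩ := hlift u hu
      obtain ⟨v', hv', rfl⟩ := hlift v hv
      exact Or.inr ⟨u', v', ⟨i - a, by omega, hu', hv'⟩, rfl, rfl⟩

/-- The relation on the three copies `ℕ ⊕ ℕ ⊕ ℕ` whose transitive closure defines `gComp Pr R`. -/
def gGlue (Pr R : GRel) : (ℕ ⊕ ℕ ⊕ ℕ) → (ℕ ⊕ ℕ ⊕ ℕ) → Prop := fun x y =>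
  (∃ x' y', Sum.map id Sum.inl x' = x ∧ Sum.map id Sum.inl y' = y ∧ R x' y') ∨
  (∃ x' y', Sum.inr x' = x ∧ Sum.inr y' = y ∧ Pr x' y')

def gThread (φ ψ : ℕ → ℕ) (i : ℕ) : Set (ℕ ⊕ ℕ ⊕ ℕ) :=
  {Sum.inl i, Sum.inr (Sum.inl (φ i)), Sum.inr (Sum.inr (ψ (φ i)))}

section Thread

variable {a b : ℕ} {φ ψ : ℕ → ℕ}

theorem exists_mem_gThread (hφ : SurjOn φ (Iio a) (Iio b)) {x y : ℕ ⊕ ℕ ⊕ ℕ}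
    (hxy : gGlue (gFun b ψ) (gFun a φ) x y) : ∃ i < a, x ∈ gThread φ ψ i := by
  rcases hxy with ⟨x', y', rfl, -, i, hi, hx', -⟩ | ⟨x', y', rfl, -, j, hj, hx', -⟩
  · exact ⟨i, hi, by rcases hx' with rfl | rfl <;> simp [gThread]⟩
  · obtain ⟨i, hi, rfl⟩ := hφ (mem_Iio.2 hj)
    exact ⟨i, hi, by rcases hx' with rfl | rfl <;> simp [gThread]⟩

theorem mem_gThread_of_gGlue (hφ : BijOn φ (Iio a) (Iio b)) (hψ : InjOn ψ (Iio b)) {i : ℕ}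
    (hi : i < a) {x y : ℕ ⊕ ℕ ⊕ ℕ} (hx : x ∈ gThread φ ψ i)
    (hxy : gGlue (gFun b ψ) (gFun a φ) x y) : y ∈ gThread φ ψ i := by
  have hφi : φ i < b := hφ.mapsTo (mem_Iio.2 hi)
  rcases hxy with ⟨x', y', rfl, rfl, j, hj, hx', hy'⟩ | ⟨x', y', rfl, rfl, j, hj, hx', hy'⟩
  · obtain rfl : j = i := by
      rcases hx' with rfl | rfl <;> simp [gThread] at hx
      · exact hx
      · exact hφ.injOn (mem_Iio.2 hj) (mem_Iio.2 hi) hx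
    rcases hy' with rfl | rfl <;> simp [gThread]
  · obtain rfl : j = φ i := by
      rcases hx' with rfl | rfl <;> simp [gThread] at hx
      · exact hx
      · exact hψ (mem_Iio.2 hj) (mem_Iio.2 hφi) hx
    rcases hy' with rfl | rfl <;> simp [gThread]

theorem mem_gThread_of_transGen (hφ : BijOn φ (Iio a) (Iio b)) (hψ : InjOn ψ (Iio b)) {i : ℕ}
    (hi : i < a) {x y : ℕ ⊕ ℕ ⊕ ℕ} (hx : x ∈ gThread φ ψ i)
    (hxy : TransGen (gGlue (gFun b ψ) (gFun a φ)) x y) : y ∈ gThread φ ψ i := by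
  induction hxy with
  | single h => exact mem_gThread_of_gGlue hφ hψ hi hx h
  | tail _ h ih => exact mem_gThread_of_gGlue hφ hψ hi ih h

theorem gComp_gFun (hφ : BijOn φ (Iio a) (Iio b)) (hψ : InjOn ψ (Iio b)) :
    gComp (gFun b ψ) (gFun a φ) = gFun a (ψ ∘ φ) := by
  have mem_iff : ∀ i u, Sum.map id Sum.inr u ∈ gThread φ ψ i ↔
      u = Sum.inl i ∨ u = Sum.inr (ψ (φ i)) := by
    rintro i (n | m) <;> simp [gThread]
  funext u v
  apply propext
  constructor
  · intro h
    obtain ⟨z, hz, -⟩ := TransGen.head'_iff.1 h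
    obtain ⟨i, hi, hu⟩ := exists_mem_gThread hφ.surjOn hz
    exact ⟨i, hi, (mem_iff i u).1 hu, (mem_iff i v).1 (mem_gThread_of_transGen hφ hψ hi hu h)⟩
  · rintro ⟨i, hi, hu, hv⟩
    have hφi : φ i < b := hφ.mapsTo (mem_Iio.2 hi)
    have toMid : ∀ w, (w = Sum.inl i ∨ w = Sum.inr (ψ (φ i))) →
        gGlue (gFun b ψ) (gFun a φ) (Sum.map id Sum.inr w) (Sum.inr (Sum.inl (φ i))) ∧
        gGlue (gFun b ψ) (gFun a φ) (Sum.inr (Sum.inl (φ i))) (Sum.map id Sum.inr w) := by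
      rintro w (rfl | rfl)
      · exact ⟨Or.inl ⟨_, Sum.inr (φ i), rfl, rfl, i, hi, Or.inl rfl, Or.inr rfl⟩,
          Or.inl ⟨Sum.inr (φ i), _, rfl, rfl, i, hi, Or.inr rfl, Or.inl rfl⟩⟩
      · exact ⟨Or.inr ⟨_, Sum.inl (φ i), rfl, rfl, φ i, hφi, Or.inr rfl, Or.inl rfl⟩,
          Or.inr ⟨Sum.inl (φ i), _, rfl, rfl, φ i, hφi, Or.inl rfl, Or.inr rfl⟩⟩
    exact TransGen.tail (TransGen.single (toMid u hu).1) (toMid v hv).2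

end Thread

inductive Conn
  | conj
  | disj

def Conn.node {P : Type} : Conn → Form P → Form P → Form P
  | .conj => Form.conj
  | .disj => Form.disj

namespace Form

variable {P : Type}

/-- The connective immediately above the `n`-th letter occurrence of `A` (counting from `0`),
where `c` is the connective immediately above `A` itself; junk for `n ≥ A.size`. -/
def parentConn (c : Option Conn) : Form P → ℕ → Option Conn
  | letter _, _ => c
  | conj A B, n =>
      if n < A.size then A.parentConn (some .conj) n else B.parentConn (some .conj) (n - A.size)
  | disj A B, n =>
      if n < A.size then A.parentConn (some .disj) n else B.parentConn (some .disj) (n - A.size)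

theorem size_node (k : Conn) (A B : Form P) : (k.node A B).size = A.size + B.size := by
  cases k <;> rfl

theorem parentConn_node (c : Option Conn) (k : Conn) (A B : Form P) (n : ℕ) :
    (k.node A B).parentConn c n =
      if n < A.size then A.parentConn (some k) n else B.parentConn (some k) (n - A.size) := by
  cases k <;> rfl

theorem parentConn_eq_of_ne {A : Form P} {c : Option Conn} {n : ℕ} (h : A.parentConn c n ≠ c)
    (c' : Option Conn) : A.parentConn c' n = A.parentConn c n := by
  cases A with
  | letter p => exact absurd rfl h
  | conj A B => rfl
  | disj A B => rfl

theorem parentConn_assoc (c : Option Conn) (k : Conn) (A B C : Form P) (n : ℕ) :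
    (k.node A (k.node B C)).parentConn c n = (k.node (k.node A B) C).parentConn c n := by
  simp only [parentConn_node, size_node]
  split_ifs <;> first | rfl | omega | (congr 1; omega)

theorem parentConn_blockSwap (c : Option Conn) (k : Conn) (A B : Form P) {n : ℕ}
    (hn : n < A.size + B.size) :
    (k.node B A).parentConn c (blockSwap A.size B.size n) = (k.node A B).parentConn c n := by
  simp only [parentConn_node, blockSwap]
  split_ifs <;> first | rfl | omega | (congr 1; omega)

theorem parentConn_d {c : Option Conn} {A B C : Form P} {n : ℕ}
    (h : (A ⋏ (B ⋎ C)).parentConn c n = some .conj) :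
    ((A ⋏ B) ⋎ C).parentConn c n = some .conj := by
  simp only [parentConn, size] at h ⊢
  by_cases hA : n < A.size
  · simpa [hA, show n < A.size + B.size by omega] using h
  by_cases hB : n - A.size < B.size
  · simp only [hA, hB, if_false, if_true] at h
    simp only [show n < A.size + B.size by omega, hA, if_true, if_false]
    -- the disjunct `B` of `B ∨ C` becomes a conjunct of `A ∧ B`
    exact (parentConn_eq_of_ne (by simp [h]) _).trans h
  · simp only [hA, hB, if_false] at h
    simpa [show ¬ n < A.size + B.size by omega, Nat.sub_sub] using h

theorem offsetAt_lt_size {A : Form P} {π : List Dir} {p : P} (h : A.subAt π = some (letter p)) :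
    A.offsetAt π < A.size := by
  induction π generalizing A with
  | nil =>
      simp only [subAt, Option.some.injEq] at h
      subst h; exact Nat.one_pos
  | cons e π ih =>
      cases A <;> cases e <;> simp only [subAt, reduceCtorEq] at h <;>
        simp only [offsetAt, size] <;> have := ih h <;> omega

theorem parentConn_offsetAt_append {A C D : Form P} {π : List Dir} {k : Conn} {d : Dir} {p : P}
    (hπ : A.subAt π = some (k.node C D)) (hx : A.subAt (π ++ [d]) = some (letter p))
    (c : Option Conn) : A.parentConn c (A.offsetAt (π ++ [d])) = some k := by
  induction π generalizing A c with
  | nil =>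
      simp only [subAt, Option.some.injEq] at hπ
      subst hπ
      cases k <;> cases d <;>
        simp only [Conn.node, subAt, List.nil_append, Option.some.injEq] at hx <;>
        subst hx <;> simp [Conn.node, offsetAt, parentConn, size]
  | cons e π ih =>
      cases A <;> cases e <;> simp only [subAt, List.cons_append, reduceCtorEq] at hπ hx <;>
        simp only [offsetAt, parentConn, List.cons_append]
      all_goals first
        | rw [if_pos (offsetAt_lt_size hx)]; exact ih hπ hx _
        | rw [if_neg (by omega), Nat.add_sub_cancel_left]; exact ih hπ hx _

end Form

namespace Term

variable {P : Type}

def occMap : ∀ {A B : Form P}, Term P A B → ℕ → ℕ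
  | _, _, .id _ => _root_.id
  | _, _, .comp g f => g.occMap ∘ f.occMap
  | _, _, @Term.conj _ A _ D _ f g => blockPar A.size D.size f.occMap g.occMap
  | _, _, @Term.disj _ A _ D _ f g => blockPar A.size D.size f.occMap g.occMap
  | _, _, .bConjTo _ _ _ => _root_.id
  | _, _, .bConjFrom _ _ _ => _root_.id
  | _, _, .bDisjTo _ _ _ => _root_.id
  | _, _, .bDisjFrom _ _ _ => _root_.id
  | _, _, .cConj A B => blockSwap A.size B.size
  | _, _, .cDisj A B => blockSwap B.size A.size
  | _, _, .d _ _ _ => _root_.id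

theorem bijOn_occMap {A B : Form P} (f : Term P A B) :
    BijOn f.occMap (Iio A.size) (Iio B.size) := by
  induction f with
  | id A => exact bijOn_id _
  | comp g f ihg ihf => exact ihg.comp ihf
  | conj f g ihf ihg => exact BijOn.blockPar ihf ihg
  | disj f g ihf ihg => exact BijOn.blockPar ihf ihg
  | cConj A B => exact bijOn_blockSwap A.size B.size
  | cDisj A B => exact bijOn_blockSwap B.size A.size
  | _ => simp only [occMap, Form.size, ← add_assoc]; exact bijOn_id _

theorem G_eq_gFun {A B : Form P} (f : Term P A B) : f.G = gFun A.size f.occMap := by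
  induction f with
  | comp g f ihg ihf =>
      rw [G, ihg, ihf, occMap, gComp_gFun f.bijOn_occMap g.bijOn_occMap.injOn]
  | conj f g ihf ihg => rw [G, ihf, ihg, gPar_gFun]; rfl
  | disj f g ihf ihg => rw [G, ihf, ihg, gPar_gFun]; rfl
  | _ => rfl

theorem linked_iff {A B : Form P} {f : Term P A B} {n m : ℕ} :
    Linked f n m ↔ n < A.size ∧ f.occMap n = m := by
  rw [Linked, G_eq_gFun, gFun_inl_inr]

theorem parentConn_occMap {A B : Form P} (f : Term P A B) {c : Option Conn} {n : ℕ}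
    (hn : n < A.size) (h : A.parentConn c n = some .conj) :
    B.parentConn c (f.occMap n) = some .conj := by
  induction f generalizing c n with
  | id A => exact h
  | comp g f ihg ihf => exact ihg (f.bijOn_occMap.mapsTo hn) (ihf hn h)
  | @conj A B D E f g ihf ihg | @disj A B D E f g ihf ihg =>
      simp only [Form.parentConn, Form.size, occMap, blockPar] at hn h ⊢
      by_cases hA : n < A.size
      · have hD : f.occMap n < D.size := f.bijOn_occMap.mapsTo hA
        simp only [hA, hD, if_true] at h ⊢
        exact ihf hA h
      · have hD : ¬ g.occMap (n - A.size) + D.size < D.size := by omega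
        simp only [hA, hD, if_false, Nat.add_sub_cancel] at h ⊢
        exact ihg (by omega) h
  | bConjTo A B C => exact (Form.parentConn_assoc c .conj A B C n).symm.trans h
  | bConjFrom A B C => exact (Form.parentConn_assoc c .conj A B C n).trans h
  | bDisjTo A B C => exact (Form.parentConn_assoc c .disj A B C n).symm.trans h
  | bDisjFrom A B C => exact (Form.parentConn_assoc c .disj A B C n).trans h
  | cConj A B => exact (Form.parentConn_blockSwap c .conj A B hn).trans h
  | cDisj A B => exact (Form.parentConn_blockSwap c .disj B A hn).trans h
  | d A B C => exact Form.parentConn_d h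

end Term

/-- **Lemma 2**: let `f : A ⊢ B` be an arrow term of DS such that an occurrence
`x` of a letter `p` in `A` is linked in `f` to an occurrence `y` of `p` in `B`.
Then it is impossible that `A` has a subformula occurrence of the form `x∧A′` or
`A′∧x` and `B` has a subformula occurrence of the form `y∨B′` or `B′∨y`. -/
theorem lemma_2 {P : Type} {A B : Form P} (f : Term P A B) (p : P)
    (πx πy : List Dir)
    (hx : A.subAt πx = some (Form.letter p)) (hy : B.subAt πy = some (Form.letter p))
    (hlink : Linked f (A.offsetAt πx) (B.offsetAt πy))
    (hA : ∃ (π : List Dir) (A' : Form P),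
      (A.subAt π = some (Form.letter p ⋏ A') ∧ πx = π ++ [Dir.l]) ∨
      (A.subAt π = some (A' ⋏ Form.letter p) ∧ πx = π ++ [Dir.r]))
    (hB : ∃ (ρ : List Dir) (B' : Form P),
      (B.subAt ρ = some (Form.letter p ⋎ B') ∧ πy = ρ ++ [Dir.l]) ∨
      (B.subAt ρ = some (B' ⋎ Form.letter p) ∧ πy = ρ ++ [Dir.r])) :
    False := by
  have hxConj : A.parentConn none (A.offsetAt πx) = some .conj := by
    obtain ⟨π, A', ⟨hπ, rfl⟩ | ⟨hπ, rfl⟩⟩ := hA <;>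
      exact Form.parentConn_offsetAt_append (k := .conj) hπ hx none
  have hyDisj : B.parentConn none (B.offsetAt πy) = some .disj := by
    obtain ⟨ρ, B', ⟨hρ, rfl⟩ | ⟨hρ, rfl⟩⟩ := hB <;>
      exact Form.parentConn_offsetAt_append (k := .disj) hρ hy none
  obtain ⟨hlt, hxy⟩ := Term.linked_iff.1 hlink
  have hyConj := f.parentConn_occMap hlt hxConj
  rw [hxy, hyDisj] at hyConj
  cases hyConj
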